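/- arXiv:2412.05418 — 3 statements merged into one kernel-verified Lean document; each statement's English description precedes it below -/
import Mathlib

section
/- For the fixed-point equation κ = λN/((P − Df_1(κ))(N − Df_1(κ))), where Df_1 is continuous and strictly decreasing with Df_1(κ) → 0 as κ → ∞ and Df_1(κ) → ∞ as κ → 0⁺, there exists a unique solution κ₂ > 0 satisfying Df_1(κ₂) < min(N,P), for any λ > 0 and N, P > 0. -/
open Filter Topology

/-- Existence and uniqueness of the fixed point κ₂ > 0 of the self-consistent equation. -/
theorem fixed_point_exists_unique (Df1 : ℝ → ℝ)
    (hcont : ContinuousOn Df1 (Set.Ioi 0))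
    (hanti : StrictAntiOn Df1 (Set.Ioi 0))
    (hpos : ∀ κ ∈ Set.Ioi (0 : ℝ), 0 < Df1 κ)
    (h0 : Tendsto Df1 (𝓝[>] 0) atTop)
    (hinf : Tendsto Df1 atTop (𝓝 0))
    (lam N P : ℝ) (hlam : 0 < lam) (hN : 0 < N) (hP : 0 < P) :
    ∃! κ : ℝ, 0 < κ ∧
      κ = lam * N / ((P - Df1 κ) * (N - Df1 κ)) ∧ Df1 κ < min N P := by
  set m := min N P with hm
  have hm0 : 0 < m := lt_min hN hP
  have hmN : m ≤ N := min_le_left _ _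
  have hmP : m ≤ P := min_le_right _ _
  -- find x₀ near 0 with Df1 x₀ > m
  obtain ⟨x₀, hx₀m, hx₀0⟩ : ∃ x, m < Df1 x ∧ 0 < x := by
    have h1 : ∀ᶠ x in 𝓝[>] (0:ℝ), m < Df1 x := h0.eventually_gt_atTop m
    have h2 : ∀ᶠ x in 𝓝[>] (0:ℝ), (0:ℝ) < x := eventually_mem_nhdsWithin
    exact (h1.and h2).exists
  -- find x₁ far away with Df1 x₁ < m
  obtain ⟨x₁, hx₁m, hx₁ge⟩ : ∃ x, Df1 x < m ∧ x₀ ≤ x := by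
    have h1 : ∀ᶠ x in atTop, Df1 x < m := hinf.eventually_lt_const hm0
    exact (h1.and (eventually_ge_atTop x₀)).exists
  have hx₁0 : 0 < x₁ := lt_of_lt_of_le hx₀0 hx₁ge
  have hx01 : x₀ < x₁ := lt_of_le_of_ne hx₁ge (by rintro rfl; linarith)
  -- IVT: find a with Df1 a = m
  have hsub : Set.Icc x₀ x₁ ⊆ Set.Ioi 0 := fun x hx => lt_of_lt_of_le hx₀0 hx.1
  obtain ⟨a, ha_mem, ha⟩ : ∃ a ∈ Set.Icc x₀ x₁, Df1 a = m := by
    have := intermediate_value_Icc' (le_of_lt hx01) (hcont.mono hsub)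
    obtain ⟨a, h1, h2⟩ := this ⟨le_of_lt hx₁m, le_of_lt hx₀m⟩
    exact ⟨a, h1, h2⟩
  have ha0 : 0 < a := lt_of_lt_of_le hx₀0 ha_mem.1
  set G : ℝ → ℝ := fun κ => κ * ((P - Df1 κ) * (N - Df1 κ)) with hG
  -- Df1 ≤ m on [a, ∞)
  have hDle : ∀ x, a ≤ x → Df1 x ≤ m := by
    intro x hx
    rcases eq_or_lt_of_le hx with rfl | h
    · exact le_of_eq ha
    · have := hanti (Set.mem_Ioi.mpr ha0) (Set.mem_Ioi.mpr (lt_trans ha0 h)) h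
      linarith [ha ▸ this]
  -- G strictly increasing on [a, ∞)
  have hGmono : ∀ x, a ≤ x → ∀ y, a ≤ y → x < y → G x < G y := by
    intro x hx y hy hxy
    have hx0 : 0 < x := lt_of_lt_of_le ha0 hx
    have hy0 : 0 < y := lt_of_lt_of_le ha0 hy
    have hdxy : Df1 y < Df1 x := hanti (Set.mem_Ioi.mpr hx0) (Set.mem_Ioi.mpr hy0) hxy
    have hdx : Df1 x ≤ m := hDle x hx
    have hA : (P - Df1 x) * (N - Df1 x) ≤ (P - Df1 y) * (N - Df1 y) :=
      mul_le_mul (by linarith) (by linarith) (by linarith) (by linarith)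
    have hB : 0 < (P - Df1 y) * (N - Df1 y) := mul_pos (by linarith) (by linarith)
    calc x * ((P - Df1 x) * (N - Df1 x)) ≤ x * ((P - Df1 y) * (N - Df1 y)) :=
          mul_le_mul_of_nonneg_left hA (le_of_lt hx0)
      _ < y * ((P - Df1 y) * (N - Df1 y)) := by
          exact mul_lt_mul_of_pos_right hxy hB
  -- find b with G b > lam * N
  set c : ℝ := (P - m / 2) * (N - m / 2) with hc
  have hc0 : 0 < c := mul_pos (by linarith) (by linarith)
  obtain ⟨b, hbm, hbge⟩ : ∃ x, Df1 x < m / 2 ∧ max a (lam * N / c + 1) ≤ x := by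
    have h1 : ∀ᶠ x in atTop, Df1 x < m / 2 := hinf.eventually_lt_const (by linarith)
    exact (h1.and (eventually_ge_atTop _)).exists
  have hab : a ≤ b := le_trans (le_max_left _ _) hbge
  have hb0 : 0 < b := lt_of_lt_of_le ha0 hab
  have hbc : lam * N / c + 1 ≤ b := le_trans (le_max_right _ _) hbge
  have hGb : lam * N < G b := by
    have h1 : c ≤ (P - Df1 b) * (N - Df1 b) :=
      mul_le_mul (by linarith) (by linarith) (by linarith) (by linarith)
    have h2 : b * c ≤ G b := mul_le_mul_of_nonneg_left h1 (le_of_lt hb0)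
    have h3 : lam * N / c * c = lam * N := div_mul_cancel₀ _ (ne_of_gt hc0)
    nlinarith [mul_le_mul_of_nonneg_right hbc (le_of_lt hc0)]
  have hGa : G a = 0 := by
    have hz : (P - m) * (N - m) = 0 := by
      rcases le_total N P with h | h
      · have h2 : m = N := min_eq_left h
        rw [h2]; ring
      · have h2 : m = P := min_eq_right h
        rw [h2]; ring
    show a * ((P - Df1 a) * (N - Df1 a)) = 0
    rw [ha, hz, mul_zero]
  -- continuity of G on [a, b]
  have hsub2 : Set.Icc a b ⊆ Set.Ioi 0 := fun x hx => lt_of_lt_of_le ha0 hx.1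
  have hGcont : ContinuousOn G (Set.Icc a b) := by
    have hc' : ContinuousOn Df1 (Set.Icc a b) := hcont.mono hsub2
    exact continuousOn_id.mul ((continuousOn_const.sub hc').mul (continuousOn_const.sub hc'))
  -- IVT for G
  obtain ⟨κ₂, hκ₂_mem, hκ₂G⟩ : ∃ κ ∈ Set.Icc a b, G κ = lam * N := by
    have := intermediate_value_Icc hab hGcont
    obtain ⟨κ, h1, h2⟩ := this ⟨by rw [hGa]; positivity, le_of_lt hGb⟩
    exact ⟨κ, h1, h2⟩
  have hκ₂a : a < κ₂ := by
    rcases eq_or_lt_of_le hκ₂_mem.1 with rfl | h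
    · exfalso; rw [hGa] at hκ₂G; nlinarith
    · exact h
  have hκ₂0 : 0 < κ₂ := lt_trans ha0 hκ₂a
  have hκ₂d : Df1 κ₂ < m := by
    have := hanti (Set.mem_Ioi.mpr ha0) (Set.mem_Ioi.mpr hκ₂0) hκ₂a
    linarith [ha ▸ this]
  have hD₂ : 0 < (P - Df1 κ₂) * (N - Df1 κ₂) := mul_pos (by linarith) (by linarith)
  refine ⟨κ₂, ⟨hκ₂0, ?_, hκ₂d⟩, ?_⟩
  · rw [eq_div_iff (ne_of_gt hD₂)]
    exact hκ₂G
  · rintro κ ⟨hκ0, hκeq, hκd⟩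
    have hDκ : 0 < (P - Df1 κ) * (N - Df1 κ) := mul_pos (by linarith [lt_min_iff.mp hκd]) (by linarith [lt_min_iff.mp hκd])
    have hκG : G κ = lam * N := (eq_div_iff (ne_of_gt hDκ)).mp hκeq
    have hκa : a < κ := by
      by_contra h
      push_neg at h
      rcases eq_or_lt_of_le h with rfl | h'
      · rw [ha] at hκd; exact absurd hκd (lt_irrefl m)
      · have := hanti (Set.mem_Ioi.mpr hκ0) (Set.mem_Ioi.mpr ha0) h'
        rw [ha] at this; exact absurd hκd (not_lt.mpr (le_of_lt this))
    rcases lt_trichotomy κ κ₂ with h | h | h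
    · have := hGmono κ (le_of_lt hκa) κ₂ (le_of_lt hκ₂a) h
      rw [hκG, hκ₂G] at this; exact absurd this (lt_irrefl _)
    · exact h
    · have := hGmono κ₂ (le_of_lt hκ₂a) κ (le_of_lt hκa) h
      rw [hκG, hκ₂G] at this; exact absurd this (lt_irrefl _)
end

section
/- The function ν ↦ ν(1/(1−γ_1(ν)) − 1/(1−γ_2)) is strictly decreasing on the interval where Df_2 < νM and γ_1(ν) < 1, where γ_1(ν) = (1/P)((1−ρ(ν))Df_1 + ρ(ν)Df_2), ρ(ν) = (νM − Df_1)/(νM − Df_2), γ_2 = Df_2/P, and Df_1 > Df_2 > 0, P > Df_1 are fixed constants. -/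
/-- ν ↦ ν(1/(1−γ₁(ν)) − 1/(1−γ₂)) is strictly decreasing where Df₂ < νM and γ₁(ν) < 1. -/
theorem nu_gamma_term_strictAnti (M P Df1 Df2 : ℝ)
    (hM : 0 < M) (hP : 0 < P)
    (h2 : 0 < Df2) (h21 : Df2 < Df1) (h1P : Df1 < P) :
    StrictAntiOn
      (fun ν : ℝ =>
        ν * (1 / (1 -
            ((1 - (ν * M - Df1) / (ν * M - Df2)) * Df1 +
              (ν * M - Df1) / (ν * M - Df2) * Df2) / P) -
          1 / (1 - Df2 / P)))
      {ν : ℝ | Df2 < ν * M ∧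
        ((1 - (ν * M - Df1) / (ν * M - Df2)) * Df1 +
          (ν * M - Df1) / (ν * M - Df2) * Df2) / P < 1} := by
  have hQ : 0 < P - Df2 := by linarith
  have hD : 0 < Df1 - Df2 := by linarith
  have key : ∀ ν : ℝ, Df2 < ν * M →
      ((1 - (ν * M - Df1) / (ν * M - Df2)) * Df1 +
          (ν * M - Df1) / (ν * M - Df2) * Df2) / P < 1 →
      (ν * (1 / (1 -
            ((1 - (ν * M - Df1) / (ν * M - Df2)) * Df1 +
              (ν * M - Df1) / (ν * M - Df2) * Df2) / P) -
          1 / (1 - Df2 / P))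
        = ν * (P * (Df1 - Df2)^2) /
            ((P - Df2) * ((ν * M - Df2) * (P - Df2) - (Df1 - Df2)^2))
        ∧ 0 < (ν * M - Df2) * (P - Df2) - (Df1 - Df2)^2) := by
    intro ν hu hγ
    have hu' : 0 < ν * M - Df2 := by linarith
    have hγ' : 0 < 1 - ((1 - (ν * M - Df1) / (ν * M - Df2)) * Df1 +
              (ν * M - Df1) / (ν * M - Df2) * Df2) / P := by linarith
    have h3 : (ν * M - Df2) ≠ 0 := ne_of_gt hu'
    have hγ1eq : 1 - ((1 - (ν * M - Df1) / (ν * M - Df2)) * Df1 +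
              (ν * M - Df1) / (ν * M - Df2) * Df2) / P
        = ((ν * M - Df2) * (P - Df2) - (Df1 - Df2)^2) / (P * (ν * M - Df2)) := by
      field_simp
      ring
    have hd : 0 < (ν * M - Df2) * (P - Df2) - (Df1 - Df2)^2 := by
      have := hγ'
      rw [hγ1eq] at this
      have hPu : 0 < P * (ν * M - Df2) := by positivity
      exact (div_pos_iff.mp this).resolve_right (fun h => absurd hPu (by linarith [h.2])) |>.1
    refine ⟨?_, hd⟩
    rw [hγ1eq, one_div_div]
    have h4 : ((ν * M - Df2) * (P - Df2) - (Df1 - Df2)^2) ≠ 0 := ne_of_gt hd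
    have h2' : (1 - Df2 / P) ≠ 0 := by
      have : 0 < 1 - Df2 / P := by
        rw [sub_pos, div_lt_one hP]; linarith
      exact ne_of_gt this
    field_simp
    ring
  intro a ha b hb hab
  obtain ⟨ha1, ha2⟩ := ha
  obtain ⟨hb1, hb2⟩ := hb
  obtain ⟨hea, hda⟩ := key a ha1 ha2
  obtain ⟨heb, hdb⟩ := key b hb1 hb2
  simp only [Set.mem_setOf_eq] at *
  rw [hea, heb]
  have ha0 : 0 < a := by
    have hh : 0 < a * M := by linarith
    by_contra h
    push_neg at h
    nlinarith
  have hden_a : 0 < (P - Df2) * ((a * M - Df2) * (P - Df2) - (Df1 - Df2)^2) :=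
    mul_pos hQ hda
  have hden_b : 0 < (P - Df2) * ((b * M - Df2) * (P - Df2) - (Df1 - Df2)^2) :=
    mul_pos hQ hdb
  rw [div_lt_div_iff₀ hden_b hden_a]
  have hc : 0 < Df2 * (P - Df2) + (Df1 - Df2)^2 := by positivity
  nlinarith [mul_pos (mul_pos hP (mul_pos hD hD)) (mul_pos (mul_pos hQ hQ) (mul_pos hc (sub_pos.mpr hab)))]
end

section
/- If s(ℓ) = min(2αℓ min(r,1), 1 − ℓ + 2αℓ min(r,1/2)) for ℓ ∈ [0,1], α > 1, r > 0, then s is maximized at ℓ = 1; i.e., s(ℓ) ≤ s(1) for all ℓ ∈ [0,1]. -/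
/-- The scaling exponent s(ℓ) = min(2αℓ·min(r,1), 1−ℓ+2αℓ·min(r,1/2)) is maximized at ℓ = 1. -/
theorem scaling_exponent_max_at_one (α r : ℝ) (hα : 1 < α) (hr : 0 < r) :
    ∀ ℓ ∈ Set.Icc (0 : ℝ) 1,
      min (2 * α * ℓ * min r 1) (1 - ℓ + 2 * α * ℓ * min r (1 / 2)) ≤
        min (2 * α * 1 * min r 1) (1 - 1 + 2 * α * 1 * min r (1 / 2)) := by
  intro ℓ hℓ
  obtain ⟨h0, h1⟩ := hℓ
  have hm0 : (0:ℝ) ≤ min r 1 := le_min hr.le zero_le_one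
  rcases le_total r (1/2) with hr2 | hr2
  · rw [min_eq_left hr2, min_eq_left (by linarith : r ≤ 1)]
    apply le_min
    · exact (min_le_left _ _).trans (by nlinarith [mul_nonneg (mul_nonneg (by linarith : (0:ℝ) ≤ 2*α) hr.le) (by linarith : (0:ℝ) ≤ 1 - ℓ)])
    · exact (min_le_left _ _).trans (by nlinarith [mul_nonneg (mul_nonneg (by linarith : (0:ℝ) ≤ 2*α) hr.le) (by linarith : (0:ℝ) ≤ 1 - ℓ)])
  · rw [min_eq_right hr2]
    apply le_min
    · exact (min_le_left _ _).trans (by nlinarith [mul_nonneg (mul_nonneg (by linarith : (0:ℝ) ≤ 2*α) hm0) (by linarith : (0:ℝ) ≤ 1 - ℓ)])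
    · exact (min_le_right _ _).trans (by nlinarith)
end
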